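/- arXiv:1808.03553 — 2 statements merged into one kernel-verified Lean document; each statement's English description precedes it below -/
import Mathlib

section
/- Let A, B be strings of lengths m and n, σ a character, and define Diff[i,j] = LCS(B[i..n], σ·A[0..j]) − P[i,j] for (i,j) ∈ [0:n]×[0:m]. Assume every row and every column of P□ contains at most one nonzero entry and every nonzero entry of P□ equals −1. Fix i ∈ [1:n], let k = nextmatch(i,σ,B), and if k < ∞ let j_min = min{ j' ∈ [1:m] : ∃ i' with i+1 ≤ i' ≤ k and P□[i',j'] ≠ 0 } (j_min = ∞ if there are no such pivotal points). Then, considering only columns j ∈ [1:m] of the density matrix Diff□: (1) if B[i] ≠ σ, then row i of Diff□ contains a nonzero entry if and only if k < ∞ and there is a pivotal point (i,j) of P□ with j < j_min; and when these conditions hold, Diff□[i,j] = 1, Diff□[i,j_min] = −1 if j_min < ∞, and all other entries of row i of Diff□ are 0. (2) if B[i] = σ, then Diff□[i,j_min] = −1 provided k < ∞ and j_min < ∞; moreover if (i,j) is a pivotal point of P□ then Diff□[i,j] = 1; and all other entries of row i of Diff□ are 0. -/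
variable {α : Type*}

/-- LCS of two lists: the maximum length of a common sublist. -/
noncomputable def LCS (X Y : List α) : ℕ :=
  sSup {k | ∃ Z : List α, Z.length = k ∧ Z.Sublist X ∧ Z.Sublist Y}

/-- `substr S i j` is S[i..j]: the characters of S at (1-based) positions i+1,…,j. -/
def substr (S : List α) (i j : ℕ) : List α := (S.take j).drop i

/-- The density matrix D□ of a matrix D. -/
def density (D : ℕ → ℕ → ℤ) (i j : ℕ) : ℤ :=
  D i j + D (i - 1) (j - 1) - D (i - 1) j - D i (j - 1)

/-- The all scores matrix K of A and B: K[i,j] = LCS(B[i..j], A) if i ≤ j, else j - i. -/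
noncomputable def Kmat (A B : List α) (i j : ℕ) : ℤ :=
  if i ≤ j then (LCS (substr B i j) A : ℤ) else (j : ℤ) - (i : ℤ)

/-- The all scores matrix P of A and B: P[i,j] = LCS(B[i..n], A[0..j]). -/
noncomputable def Pmat (A B : List α) (i j : ℕ) : ℤ :=
  (LCS (substr B i B.length) (substr A 0 j) : ℤ)

/-- nextmatch(i,σ,B): minimum (1-based) position i' with i < i' ≤ |B| and B[i'] = σ; ⊤ (∞) if none. -/
noncomputable def nextmatch (i : ℕ) (σ : α) (B : List α) : ℕ∞ :=
  sInf {k : ℕ∞ | ∃ k' : ℕ, k = (k' : ℕ∞) ∧ i < k' ∧ k' ≤ B.length ∧ B[k' - 1]? = some σ}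

/-- prevmatch(j,σ,B): maximum (1-based) position i' with 1 ≤ i' ≤ j and B[i'] = σ; ⊥ (−∞) if none. -/
noncomputable def prevmatch (j : ℕ) (σ : α) (B : List α) : WithBot ℕ :=
  sSup {k : WithBot ℕ | ∃ k' : ℕ, k = (k' : WithBot ℕ) ∧ 1 ≤ k' ∧ k' ≤ j ∧ B[k' - 1]? = some σ}

/-- j_min: the minimum column index (in [1:m]) among all pivotal points of P□
in rows i+1,…,k; ∞ (⊤) if there are no such pivotal points. -/
noncomputable def jminP (A B : List α) (m i k : ℕ) : ℕ∞ :=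
  sInf {j : ℕ∞ | ∃ j' : ℕ, j = (j' : ℕ∞) ∧ 1 ≤ j' ∧ j' ≤ m ∧
    ∃ i', i + 1 ≤ i' ∧ i' ≤ k ∧ density (Pmat A B) i' j' ≠ 0}

/-!
Write `Q[a,j] = LCS(B[a..n], σ·A[0..j])`. If `σ` does not occur in `B[a..n]` then `Q = P` in
row `a`; otherwise, with `k = nextmatch(a,σ,B)`, the prepended `σ` is either unmatched or matched
with `B[k]`, so `Q[a,j] = max(P[a,j], 1 + P[k,j])`. Now `P[a,j] - P[k,j]` is minus the sum of
`P□` over rows `a+1..k` and columns `1..j`, where every pivotal point contributes `-1`; hence row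
`a` of `Diff` is the step function `[j < c_a]`, with `c_a` the least column of a pivotal point in
rows `a+1..k`. So row `i` of `Diff□` is `[j = c_{i-1}] - [j = c_i]`, and it remains to compare
`c_{i-1}` with `c_i`: when `B[i] ≠ σ` the block of rows gains row `i`, and when `B[i] = σ` it
becomes row `i` alone. Having at most one pivotal point per row and per column settles each case.
-/

section LCS

lemma LCS_bddAbove (X Y : List α) :
    BddAbove {k | ∃ Z : List α, Z.length = k ∧ Z.Sublist X ∧ Z.Sublist Y} :=
  ⟨X.length, fun _ ⟨_, hZ, hX, _⟩ => hZ ▸ hX.length_le⟩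

lemma exists_sublist_length_eq_LCS (X Y : List α) :
    ∃ Z : List α, Z.length = LCS X Y ∧ Z.Sublist X ∧ Z.Sublist Y :=
  Nat.sSup_mem (by exact ⟨0, [], rfl, List.nil_sublist X, List.nil_sublist Y⟩) (LCS_bddAbove X Y)

lemma length_le_LCS {X Y Z : List α} (hX : Z.Sublist X) (hY : Z.Sublist Y) :
    Z.length ≤ LCS X Y :=
  le_csSup (LCS_bddAbove X Y) ⟨Z, rfl, hX, hY⟩

lemma LCS_le {X Y : List α} {c : ℕ}
    (h : ∀ Z : List α, Z.Sublist X → Z.Sublist Y → Z.length ≤ c) : LCS X Y ≤ c := by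
  obtain ⟨Z, hZ, hX, hY⟩ := exists_sublist_length_eq_LCS X Y
  exact hZ ▸ h Z hX hY

lemma LCS_nil_right (X : List α) : LCS X [] = 0 :=
  Nat.le_zero.mp <| LCS_le fun _ _ hY => by simp [List.sublist_nil.mp hY]

lemma LCS_le_LCS_cons_right (σ : α) (X W : List α) : LCS X W ≤ LCS X (σ :: W) := by
  obtain ⟨Z, hZ, hX, hW⟩ := exists_sublist_length_eq_LCS X W
  exact hZ ▸ length_le_LCS hX (hW.cons σ)

lemma LCS_cons_right_of_notMem {σ : α} {X : List α} (h : σ ∉ X) (W : List α) :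
    LCS X (σ :: W) = LCS X W := by
  refine le_antisymm (LCS_le fun Z hX hW => ?_) (LCS_le_LCS_cons_right σ X W)
  rcases List.sublist_cons_iff.mp hW with hW | ⟨r, rfl, -⟩
  · exact length_le_LCS hX hW
  · exact absurd (hX.subset List.mem_cons_self) h

lemma sublist_of_cons_sublist_append_cons {σ : α} {X₁ X₂ r : List α} (h : σ ∉ X₁)
    (hr : (σ :: r).Sublist (X₁ ++ σ :: X₂)) : r.Sublist X₂ := by
  induction X₁ with
  | nil => exact List.cons_sublist_cons.mp hr
  | cons a X₁ ih =>
    rw [List.mem_cons, not_or] at h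
    rcases List.sublist_cons_iff.mp hr with hr | ⟨_, hr, -⟩
    · exact ih h.2 hr
    · exact absurd (List.cons.inj hr).1 h.1

lemma LCS_append_cons_cons_right {σ : α} {X₁ : List α} (h : σ ∉ X₁) (X₂ W : List α) :
    LCS (X₁ ++ σ :: X₂) (σ :: W) = max (LCS (X₁ ++ σ :: X₂) W) (LCS X₂ W + 1) := by
  refine le_antisymm (LCS_le fun Z hX hW => ?_) (max_le (LCS_le_LCS_cons_right σ _ W) ?_)
  · rcases List.sublist_cons_iff.mp hW with hW | ⟨r, rfl, hr⟩
    · exact (length_le_LCS hX hW).trans (le_max_left _ _)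
    · exact (Nat.succ_le_succ (length_le_LCS (sublist_of_cons_sublist_append_cons h hX) hr)).trans
        (le_max_right _ _)
  · obtain ⟨Z, hZ, hX, hW⟩ := exists_sublist_length_eq_LCS X₂ W
    have := length_le_LCS ((hX.cons_cons σ).trans (List.sublist_append_right X₁ _))
      (hW.cons_cons σ)
    rwa [List.length_cons, hZ] at this

end LCS

lemma ENat.natCast_mem_of_sInf_eq {S : Set ℕ∞} {k : ℕ} (h : sInf S = k) : (k : ℕ∞) ∈ S :=
  h ▸ csInf_mem (Set.nonempty_iff_ne_empty.mpr fun hS => by simp [hS] at h)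

section Nextmatch

variable {σ : α} {B : List α}

lemma nextmatch_le {a t : ℕ} (hat : a < t) (ht : B[t - 1]? = some σ) :
    nextmatch a σ B ≤ t :=
  sInf_le ⟨t, rfl, hat, by have := (List.getElem?_eq_some_iff.mp ht).1; omega, ht⟩

lemma notMem_take_drop_of_nextmatch_eq_coe {a k : ℕ} (hk : nextmatch a σ B = k) :
    σ ∉ (B.drop a).take (k - 1 - a) := by
  rw [List.mem_iff_getElem?]
  rintro ⟨t, ht⟩
  rw [List.getElem?_take, List.getElem?_drop] at ht
  split_ifs at ht with htk
  have := hk ▸ nextmatch_le (t := a + t + 1) (by omega) ht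
  exact absurd (Nat.cast_le.mp this) (by omega)

lemma notMem_drop_of_nextmatch_eq_top {a : ℕ} (h : nextmatch a σ B = ⊤) : σ ∉ B.drop a := by
  rw [List.mem_iff_getElem?]
  rintro ⟨t, ht⟩
  rw [List.getElem?_drop] at ht
  exact ENat.natCast_ne_top _ (top_le_iff.mp (h ▸ nextmatch_le (t := a + t + 1) (by omega) ht))

lemma drop_eq_of_nextmatch_eq_coe {a k : ℕ} (hk : nextmatch a σ B = k) :
    a < k ∧ k ≤ B.length ∧ ∃ X₁, σ ∉ X₁ ∧ B.drop a = X₁ ++ σ :: B.drop k := by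
  obtain ⟨_, hk', hak, hkn, hσ⟩ := ENat.natCast_mem_of_sInf_eq hk
  obtain rfl : k = _ := ENat.natCast_inj.mp hk'
  refine ⟨hak, hkn, _, notMem_take_drop_of_nextmatch_eq_coe hk, ?_⟩
  obtain ⟨hlt, hget⟩ := List.getElem?_eq_some_iff.mp hσ
  conv_lhs => rw [← List.take_append_drop (k - 1 - a) (B.drop a)]
  rw [List.drop_drop,
    show a + (k - 1 - a) = k - 1 by omega, List.drop_eq_getElem_cons hlt, hget,
    show k - 1 + 1 = k by omega]

lemma nextmatch_pred_of_getElem_ne {i : ℕ} (hi : 1 ≤ i) (h : B[i - 1]? ≠ some σ) :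
    nextmatch (i - 1) σ B = nextmatch i σ B := by
  unfold nextmatch
  congr 1
  ext x
  constructor
  · rintro ⟨t, rfl, hit, htn, ht⟩
    obtain rfl | hit := eq_or_lt_of_le (show i ≤ t by omega)
    · exact absurd ht h
    · exact ⟨t, rfl, hit, htn, ht⟩
  · rintro ⟨t, rfl, hit, htn, ht⟩
    exact ⟨t, rfl, by omega, htn, ht⟩

lemma nextmatch_pred_of_getElem_eq {i : ℕ} (hi : 1 ≤ i) (h : B[i - 1]? = some σ) :
    nextmatch (i - 1) σ B = i := by
  refine le_antisymm (nextmatch_le (by omega) h) (le_sInf ?_)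
  rintro _ ⟨t, rfl, hit, -, -⟩
  exact Nat.cast_le.mpr (by omega)

end Nextmatch

lemma sum_density_eq (D : ℕ → ℕ → ℤ) {a k : ℕ} (hak : a ≤ k) (j : ℕ) :
    ∑ x ∈ Finset.Ico a k, ∑ y ∈ Finset.range j, density D (x + 1) (y + 1) =
      (D k j - D k 0) - (D a j - D a 0) := by
  have hrow : ∀ x, ∑ y ∈ Finset.range j, density D (x + 1) (y + 1) =
      (D (x + 1) j - D (x + 1) 0) - (D x j - D x 0) := fun x => by
    rw [sub_sub_sub_comm, ← Finset.sum_range_sub (fun y => D (x + 1) y - D x y)]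
    refine Finset.sum_congr rfl fun y _ => ?_
    simp only [density, Nat.add_sub_cancel]
    ring
  simp_rw [hrow]
  exact Finset.sum_Ico_sub (fun x => D x j - D x 0) hak

section Pmat

variable {A B : List α}

lemma Pmat_zero_right (a : ℕ) : Pmat A B a 0 = 0 := by
  simp [Pmat, substr, LCS_nil_right]

lemma Pmat_sub_Pmat_eq_sum {a k : ℕ} (hak : a ≤ k) (j : ℕ) :
    Pmat A B k j - Pmat A B a j =
      ∑ x ∈ Finset.Ico a k, ∑ y ∈ Finset.range j, density (Pmat A B) (x + 1) (y + 1) := by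
  rw [sum_density_eq _ hak, Pmat_zero_right, Pmat_zero_right, sub_zero, sub_zero]

lemma jminP_le_of_density_ne_zero {m a k i' j' : ℕ} (hai : a < i') (hik : i' ≤ k) (hj : 1 ≤ j')
    (hjm : j' ≤ m) (h : density (Pmat A B) i' j' ≠ 0) : jminP A B m a k ≤ j' :=
  sInf_le ⟨j', rfl, hj, hjm, i', hai, hik, h⟩

lemma density_ne_zero_of_jminP_eq {m a k j : ℕ} (h : jminP A B m a k = j) :
    1 ≤ j ∧ j ≤ m ∧ ∃ i', a < i' ∧ i' ≤ k ∧ density (Pmat A B) i' j ≠ 0 := by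
  obtain ⟨_, hj, h⟩ := ENat.natCast_mem_of_sInf_eq h
  obtain rfl := ENat.natCast_inj.mp hj
  exact h

lemma jminP_le_coe_iff {m a k j : ℕ} (hjm : j ≤ m) :
    jminP A B m a k ≤ j ↔
      ∃ x ∈ Finset.Ico a k, ∃ y ∈ Finset.range j, density (Pmat A B) (x + 1) (y + 1) ≠ 0 := by
  constructor
  · intro h
    obtain ⟨j₀, hj₀⟩ := ENat.ne_top_iff_exists.mp (ne_top_of_le_ne_top (ENat.natCast_ne_top j) h)
    obtain ⟨hj₀1, -, i', hai, hik, hne⟩ := density_ne_zero_of_jminP_eq hj₀.symm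
    have : j₀ ≤ j := by rw [← hj₀] at h; exact_mod_cast h
    refine ⟨i' - 1, by simp; omega, j₀ - 1, by simp; omega, ?_⟩
    rwa [Nat.sub_add_cancel (by omega), Nat.sub_add_cancel hj₀1]
  · rintro ⟨x, hx, y, hy, hne⟩
    rw [Finset.mem_Ico] at hx
    rw [Finset.mem_range] at hy
    exact (jminP_le_of_density_ne_zero (by omega) (by omega) (by omega) (by omega) hne).trans
      (Nat.cast_le.mpr hy)

lemma Pmat_le_Pmat {a k j : ℕ} (hak : a ≤ k)
    (hle : ∀ x ∈ Finset.Ico a k, ∀ y ∈ Finset.range j, density (Pmat A B) (x + 1) (y + 1) ≤ 0) :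
    Pmat A B k j ≤ Pmat A B a j := by
  have := Finset.sum_nonpos fun x hx => Finset.sum_nonpos (hle x hx)
  rw [← Pmat_sub_Pmat_eq_sum hak] at this
  omega

lemma Pmat_lt_Pmat_iff {a k j : ℕ} (hak : a ≤ k)
    (hle : ∀ x ∈ Finset.Ico a k, ∀ y ∈ Finset.range j, density (Pmat A B) (x + 1) (y + 1) ≤ 0) :
    Pmat A B k j < Pmat A B a j ↔
      ∃ x ∈ Finset.Ico a k, ∃ y ∈ Finset.range j, density (Pmat A B) (x + 1) (y + 1) ≠ 0 := by
  rw [← sub_neg, Pmat_sub_Pmat_eq_sum hak,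
    Finset.sum_neg_iff_of_nonpos fun x hx => Finset.sum_nonpos (hle x hx)]
  refine exists_congr fun x => and_congr_right fun hx => ?_
  rw [Finset.sum_neg_iff_of_nonpos (hle x hx)]
  exact exists_congr fun y => and_congr_right fun hy => (hle x hx y hy).lt_iff_ne

end Pmat

/-- The column at which row `a` of `Diff` drops from `1` to `0`. -/
noncomputable def diffThreshold (A B : List α) (m : ℕ) (σ : α) (a : ℕ) : ℕ∞ :=
  ENat.recTopCoe 0 (jminP A B m a) (nextmatch a σ B)

section Diff

variable {A B : List α} {σ : α} {m : ℕ}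

lemma diffThreshold_of_nextmatch_eq_top {a : ℕ} (h : nextmatch a σ B = ⊤) :
    diffThreshold A B m σ a = 0 := by
  rw [diffThreshold, h]; rfl

lemma diffThreshold_of_nextmatch_eq_coe {a k : ℕ} (h : nextmatch a σ B = k) :
    diffThreshold A B m σ a = jminP A B m a k := by
  rw [diffThreshold, h]; rfl

lemma LCS_cons_sub_Pmat_eq_ite
    (hle : ∀ i' j', 1 ≤ i' → i' ≤ B.length → 1 ≤ j' → j' ≤ m → density (Pmat A B) i' j' ≤ 0)
    (a : ℕ) {j : ℕ} (hjm : j ≤ m) :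
    (LCS (substr B a B.length) (σ :: substr A 0 j) : ℤ) - Pmat A B a j =
      if (j : ℕ∞) < diffThreshold A B m σ a then 1 else 0 := by
  have hdrop : substr B a B.length = B.drop a := by simp [substr]
  cases hk : nextmatch a σ B with
  | top =>
    rw [diffThreshold_of_nextmatch_eq_top hk, Pmat, hdrop,
      LCS_cons_right_of_notMem (notMem_drop_of_nextmatch_eq_top hk)]
    simp
  | coe k =>
    obtain ⟨hak, hkn, X₁, hX₁, hsplit⟩ := drop_eq_of_nextmatch_eq_coe hk
    have hQ : (LCS (substr B a B.length) (σ :: substr A 0 j) : ℤ) =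
        max (Pmat A B a j) (Pmat A B k j + 1) := by
      rw [Pmat, Pmat, hdrop, hsplit, LCS_append_cons_cons_right hX₁, ← hsplit, ← hdrop]
      simp [substr]
    have hblock : ∀ x ∈ Finset.Ico a k, ∀ y ∈ Finset.range j,
        density (Pmat A B) (x + 1) (y + 1) ≤ 0 := fun x hx y hy => by
      rw [Finset.mem_Ico] at hx
      rw [Finset.mem_range] at hy
      exact hle _ _ (by omega) (by omega) (by omega) (by omega)
    have hPle := Pmat_le_Pmat hak.le hblock
    have hpivot : jminP A B m a k ≤ j ↔ Pmat A B k j < Pmat A B a j :=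
      (jminP_le_coe_iff hjm).trans (Pmat_lt_Pmat_iff hak.le hblock).symm
    rw [hQ, diffThreshold_of_nextmatch_eq_coe hk]
    split_ifs with hlt
    · have := mt hpivot.mpr (not_le.mpr hlt)
      omega
    · have := hpivot.mp (not_lt.mp hlt)
      omega

lemma ite_lt_sub_ite_lt_pred (c : ℕ∞) {j : ℕ} (hj : 1 ≤ j) :
    ((if (j : ℕ∞) < c then 1 else 0 : ℤ) - if ((j - 1 : ℕ) : ℕ∞) < c then 1 else 0) =
      -(if (j : ℕ∞) = c then 1 else 0) := by
  induction c using ENat.recTopCoe with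
  | top => simp only [ENat.natCast_lt_top, ENat.natCast_ne_top, if_true, if_false]; norm_num
  | coe c =>
    simp only [Nat.cast_lt, Nat.cast_inj]
    split_ifs <;> omega

lemma density_eq_of_step (D : ℕ → ℕ → ℤ) (c : ℕ → ℕ∞) {i j : ℕ} (hj : 1 ≤ j)
    (hD : ∀ a, ∀ j' ≤ j, D a j' = if (j' : ℕ∞) < c a then 1 else 0) :
    density D i j =
      (if (j : ℕ∞) = c (i - 1) then 1 else 0) - (if (j : ℕ∞) = c i then 1 else 0) := by
  have hi := ite_lt_sub_ite_lt_pred (c i) hj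
  have hpred := ite_lt_sub_ite_lt_pred (c (i - 1)) hj
  rw [density, hD i j le_rfl, hD i (j - 1) (by omega), hD (i - 1) j le_rfl,
    hD (i - 1) (j - 1) (by omega)]
  linarith

end Diff

section Threshold

variable {A B : List α} {σ : α} {m : ℕ}

lemma jminP_eq_min {a b k : ℕ} (hab : a ≤ b) (hbk : b ≤ k) :
    jminP A B m a k = min (jminP A B m a b) (jminP A B m b k) := by
  rw [jminP, jminP, jminP, ← sInf_union]
  congr 1
  ext x
  rw [Set.mem_union]
  constructor
  · rintro ⟨j', rfl, h1, h2, i', hi1, hi2, hne⟩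
    rcases le_or_gt i' b with h | h
    · exact Or.inl ⟨j', rfl, h1, h2, i', hi1, h, hne⟩
    · exact Or.inr ⟨j', rfl, h1, h2, i', h, hi2, hne⟩
  · rintro (⟨j', rfl, h1, h2, i', hi1, hi2, hne⟩ | ⟨j', rfl, h1, h2, i', hi1, hi2, hne⟩)
    · exact ⟨j', rfl, h1, h2, i', hi1, by omega, hne⟩
    · exact ⟨j', rfl, h1, h2, i', by omega, hi2, hne⟩

lemma jminP_ne_of_forall_density_eq_zero {a k j : ℕ}
    (h : ∀ i', a < i' → i' ≤ k → density (Pmat A B) i' j = 0) : jminP A B m a k ≠ j := fun hj =>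
  have ⟨_, _, i', hai, hik, hne⟩ := density_ne_zero_of_jminP_eq hj
  hne (h i' hai hik)

lemma jminP_pred_self_eq {i j : ℕ} (hi : 1 ≤ i) (hj : 1 ≤ j) (hjm : j ≤ m)
    (hp : density (Pmat A B) i j ≠ 0)
    (huniq : ∀ j', 1 ≤ j' → j' ≤ m → density (Pmat A B) i j' ≠ 0 → j' = j) :
    jminP A B m (i - 1) i = j := by
  refine le_antisymm (jminP_le_of_density_ne_zero (by omega) le_rfl hj hjm hp) (le_sInf ?_)
  rintro _ ⟨j', rfl, h1, h2, i', hi1, hi2, hne⟩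
  obtain rfl : i' = i := by omega
  exact Nat.cast_le.mpr (huniq j' h1 h2 hne).ge

lemma density_ne_zero_of_jminP_pred_self_eq {i j : ℕ} (h : jminP A B m (i - 1) i = j) :
    1 ≤ j ∧ j ≤ m ∧ density (Pmat A B) i j ≠ 0 := by
  obtain ⟨hj, hjm, i', hi1, hi2, hne⟩ := density_ne_zero_of_jminP_eq h
  obtain rfl : i' = i := by omega
  exact ⟨hj, hjm, hne⟩

lemma diffThreshold_ne_coe {i j : ℕ} (hj : 1 ≤ j)
    (h : ∀ k : ℕ, nextmatch i σ B = k → jminP A B m i k ≠ j) :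
    diffThreshold A B m σ i ≠ j := by
  cases hk : nextmatch i σ B with
  | top =>
    rw [diffThreshold_of_nextmatch_eq_top hk]
    exact_mod_cast (show 0 ≠ j by omega)
  | coe k => rw [diffThreshold_of_nextmatch_eq_coe hk]; exact h k hk

lemma diffThreshold_pred_of_getElem_ne {i k : ℕ} (hi : 1 ≤ i) (hσ : B[i - 1]? ≠ some σ)
    (hk : nextmatch i σ B = k) :
    diffThreshold A B m σ (i - 1) = min (jminP A B m (i - 1) i) (jminP A B m i k) := by
  rw [diffThreshold_of_nextmatch_eq_coe ((nextmatch_pred_of_getElem_ne hi hσ).trans hk),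
    jminP_eq_min (by omega) (drop_eq_of_nextmatch_eq_coe hk).1.le]

lemma diffThreshold_pred_of_getElem_ne_of_top {i : ℕ} (hi : 1 ≤ i) (hσ : B[i - 1]? ≠ some σ)
    (hk : nextmatch i σ B = ⊤) : diffThreshold A B m σ (i - 1) = 0 :=
  diffThreshold_of_nextmatch_eq_top ((nextmatch_pred_of_getElem_ne hi hσ).trans hk)

lemma diffThreshold_pred_of_getElem_eq {i : ℕ} (hi : 1 ≤ i) (hσ : B[i - 1]? = some σ) :
    diffThreshold A B m σ (i - 1) = jminP A B m (i - 1) i :=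
  diffThreshold_of_nextmatch_eq_coe (nextmatch_pred_of_getElem_eq hi hσ)

end Threshold

section Row

variable {A B : List α} {σ : α} {m i : ℕ} {Diff : ℕ → ℕ → ℤ}

lemma density_row_of_getElem_ne (hi : 1 ≤ i) (hσ : B[i - 1]? ≠ some σ)
    (hrow : ∀ j, 1 ≤ j → j ≤ m → density Diff i j =
      (if (j : ℕ∞) = diffThreshold A B m σ (i - 1) then 1 else 0) -
        (if (j : ℕ∞) = diffThreshold A B m σ i then 1 else 0))
    (hpivot : ∀ j, 1 ≤ j → j ≤ m → density (Pmat A B) i j ≠ 0 → jminP A B m (i - 1) i = j) :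
    ((∃ j, 1 ≤ j ∧ j ≤ m ∧ density Diff i j ≠ 0) ↔
        ∃ k : ℕ, nextmatch i σ B = (k : ℕ∞) ∧
          ∃ j, 1 ≤ j ∧ j ≤ m ∧ density (Pmat A B) i j ≠ 0 ∧
            (j : ℕ∞) < jminP A B m i k) ∧
      (∀ k : ℕ, nextmatch i σ B = (k : ℕ∞) →
        ∀ j, 1 ≤ j → j ≤ m → density (Pmat A B) i j ≠ 0 →
          (j : ℕ∞) < jminP A B m i k →
          density Diff i j = 1 ∧
          (∀ j₀ : ℕ, jminP A B m i k = (j₀ : ℕ∞) → density Diff i j₀ = -1) ∧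
          (∀ j'', 1 ≤ j'' → j'' ≤ m → j'' ≠ j →
            jminP A B m i k ≠ (j'' : ℕ∞) → density Diff i j'' = 0)) := by
  have hrow_of_lt : ∀ k : ℕ, nextmatch i σ B = k → ∀ j, 1 ≤ j → j ≤ m →
      density (Pmat A B) i j ≠ 0 → (j : ℕ∞) < jminP A B m i k → ∀ j'', 1 ≤ j'' → j'' ≤ m →
        density Diff i j'' =
          (if j'' = j then 1 else 0) - (if (j'' : ℕ∞) = jminP A B m i k then 1 else 0) := by
    intro k hk j hj hjm hp hlt j'' h1 h2
    rw [hrow j'' h1 h2, diffThreshold_pred_of_getElem_ne hi hσ hk, hpivot j hj hjm hp,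
      min_eq_left hlt.le, diffThreshold_of_nextmatch_eq_coe hk]
    simp only [Nat.cast_inj]
  refine ⟨⟨fun ⟨j, hj, hjm, hne⟩ => ?_, fun ⟨k, hk, j, hj, hjm, hp, hlt⟩ => ?_⟩, ?_⟩
  · rw [hrow j hj hjm] at hne
    cases hk : nextmatch i σ B with
    | top =>
      rw [diffThreshold_pred_of_getElem_ne_of_top hi hσ hk,
        diffThreshold_of_nextmatch_eq_top hk, sub_self] at hne
      exact absurd rfl hne
    | coe k =>
      rw [diffThreshold_pred_of_getElem_ne hi hσ hk, diffThreshold_of_nextmatch_eq_coe hk] at hne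
      have hlt : jminP A B m (i - 1) i < jminP A B m i k := by
        by_contra h
        rw [min_eq_right (not_lt.mp h), sub_self] at hne
        exact hne rfl
      obtain ⟨j₀, hj₀⟩ := ENat.ne_top_iff_exists.mp hlt.ne_top
      obtain ⟨h1, h2, hp⟩ := density_ne_zero_of_jminP_pred_self_eq hj₀.symm
      exact ⟨k, rfl, j₀, h1, h2, hp, hj₀ ▸ hlt⟩
  · refine ⟨j, hj, hjm, ?_⟩
    simp [hrow_of_lt k hk j hj hjm hp hlt j hj hjm, hlt.ne]
  · intro k hk j hj hjm hp hlt
    have h := hrow_of_lt k hk j hj hjm hp hlt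
    refine ⟨by simp [h j hj hjm, hlt.ne], fun j₀ hj₀ => ?_,
      fun j'' h1 h2 hne hne' => by simp [h j'' h1 h2, hne, Ne.symm hne']⟩
    obtain ⟨h1, h2, -⟩ := density_ne_zero_of_jminP_eq hj₀
    have : j₀ ≠ j := by rintro rfl; exact hlt.ne hj₀.symm
    simp [h j₀ h1 h2, hj₀, this]

lemma density_row_of_getElem_eq (hi : 1 ≤ i) (hσ : B[i - 1]? = some σ)
    (hrow : ∀ j, 1 ≤ j → j ≤ m → density Diff i j =
      (if (j : ℕ∞) = diffThreshold A B m σ (i - 1) then 1 else 0) -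
        (if (j : ℕ∞) = diffThreshold A B m σ i then 1 else 0))
    (hpivot : ∀ j, 1 ≤ j → j ≤ m → density (Pmat A B) i j ≠ 0 → jminP A B m (i - 1) i = j)
    (hcol : ∀ j, 1 ≤ j → j ≤ m → density (Pmat A B) i j ≠ 0 →
      ∀ i', i < i' → i' ≤ B.length → density (Pmat A B) i' j = 0) :
    (∀ k : ℕ, nextmatch i σ B = (k : ℕ∞) →
        ∀ j₀ : ℕ, jminP A B m i k = (j₀ : ℕ∞) → density Diff i j₀ = -1) ∧
      (∀ j, 1 ≤ j → j ≤ m → density (Pmat A B) i j ≠ 0 → density Diff i j = 1) ∧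
      (∀ j'', 1 ≤ j'' → j'' ≤ m → density (Pmat A B) i j'' = 0 →
        (∀ k j₀ : ℕ, nextmatch i σ B = (k : ℕ∞) →
          jminP A B m i k = (j₀ : ℕ∞) → j'' ≠ j₀) →
        density Diff i j'' = 0) := by
  have hpred := diffThreshold_pred_of_getElem_eq (A := A) (m := m) hi hσ
  have hcol' : ∀ k : ℕ, nextmatch i σ B = k → ∀ j, 1 ≤ j → j ≤ m →
      density (Pmat A B) i j ≠ 0 → jminP A B m i k ≠ j := fun k hk j hj hjm hp =>
    jminP_ne_of_forall_density_eq_zero fun i' hii' hik =>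
      hcol j hj hjm hp i' hii' (hik.trans (drop_eq_of_nextmatch_eq_coe hk).2.1)
  refine ⟨fun k hk j₀ hj₀ => ?_, fun j hj hjm hp => ?_, fun j'' h1 h2 hz hne => ?_⟩
  · obtain ⟨h1, h2, -⟩ := density_ne_zero_of_jminP_eq hj₀
    have : (j₀ : ℕ∞) ≠ jminP A B m (i - 1) i := fun h =>
      hcol' k hk j₀ h1 h2 (density_ne_zero_of_jminP_pred_self_eq h.symm).2.2 hj₀
    simp [hrow j₀ h1 h2, hpred, diffThreshold_of_nextmatch_eq_coe hk, hj₀, this]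
  · have : (j : ℕ∞) ≠ diffThreshold A B m σ i :=
      (diffThreshold_ne_coe hj fun k hk => hcol' k hk j hj hjm hp).symm
    simp [hrow j hj hjm, hpred, hpivot j hj hjm hp, this]
  · have hR : (j'' : ℕ∞) ≠ jminP A B m (i - 1) i := fun h =>
      (density_ne_zero_of_jminP_pred_self_eq h.symm).2.2 hz
    have hc : (j'' : ℕ∞) ≠ diffThreshold A B m σ i :=
      (diffThreshold_ne_coe h1 fun k hk h => hne k j'' hk h rfl).symm
    simp [hrow j'' h1 h2, hpred, hR, hc]

end Row

theorem stmt_18_general {α : Type*} (A B : List α) (m n : ℕ)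
    (hB : B.length = n) (σ : α)
    (Diff : ℕ → ℕ → ℤ)
    (hDiff : ∀ i j, Diff i j =
      (LCS (substr B i n) (σ :: substr A 0 j) : ℤ) - Pmat A B i j)
    (hRow : ∀ i, 1 ≤ i → i ≤ n → ∀ j₁ j₂, 1 ≤ j₁ → j₁ ≤ m → 1 ≤ j₂ → j₂ ≤ m →
      density (Pmat A B) i j₁ ≠ 0 → density (Pmat A B) i j₂ ≠ 0 → j₁ = j₂)
    (hCol : ∀ j, 1 ≤ j → j ≤ m → ∀ i₁ i₂, 1 ≤ i₁ → i₁ ≤ n → 1 ≤ i₂ → i₂ ≤ n →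
      density (Pmat A B) i₁ j ≠ 0 → density (Pmat A B) i₂ j ≠ 0 → i₁ = i₂)
    (hVal : ∀ i, 1 ≤ i → i ≤ n → ∀ j, 1 ≤ j → j ≤ m →
      density (Pmat A B) i j ≠ 0 → density (Pmat A B) i j = -1)
    (i : ℕ) (hi1 : 1 ≤ i) (hin : i ≤ n) :
    -- Part (1): B[i] ≠ σ
    (B[i - 1]? ≠ some σ →
      ((∃ j, 1 ≤ j ∧ j ≤ m ∧ density Diff i j ≠ 0) ↔
        ∃ k : ℕ, nextmatch i σ B = (k : ℕ∞) ∧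
          ∃ j, 1 ≤ j ∧ j ≤ m ∧ density (Pmat A B) i j ≠ 0 ∧
            (j : ℕ∞) < jminP A B m i k) ∧
      (∀ k : ℕ, nextmatch i σ B = (k : ℕ∞) →
        ∀ j, 1 ≤ j → j ≤ m → density (Pmat A B) i j ≠ 0 →
          (j : ℕ∞) < jminP A B m i k →
          density Diff i j = 1 ∧
          (∀ j₀ : ℕ, jminP A B m i k = (j₀ : ℕ∞) → density Diff i j₀ = -1) ∧
          (∀ j'', 1 ≤ j'' → j'' ≤ m → j'' ≠ j →
            jminP A B m i k ≠ (j'' : ℕ∞) → density Diff i j'' = 0))) ∧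
    -- Part (2): B[i] = σ
    (B[i - 1]? = some σ →
      (∀ k : ℕ, nextmatch i σ B = (k : ℕ∞) →
        ∀ j₀ : ℕ, jminP A B m i k = (j₀ : ℕ∞) → density Diff i j₀ = -1) ∧
      (∀ j, 1 ≤ j → j ≤ m → density (Pmat A B) i j ≠ 0 → density Diff i j = 1) ∧
      (∀ j'', 1 ≤ j'' → j'' ≤ m → density (Pmat A B) i j'' = 0 →
        (∀ k j₀ : ℕ, nextmatch i σ B = (k : ℕ∞) →
          jminP A B m i k = (j₀ : ℕ∞) → j'' ≠ j₀) →
        density Diff i j'' = 0)) := by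
  subst hB
  have hle : ∀ i' j', 1 ≤ i' → i' ≤ B.length → 1 ≤ j' → j' ≤ m →
      density (Pmat A B) i' j' ≤ 0 := fun i' j' h1 h2 h3 h4 =>
    (eq_or_ne _ 0).elim le_of_eq fun h => (hVal i' h1 h2 j' h3 h4 h).trans_le (by norm_num)
  have hrow : ∀ j, 1 ≤ j → j ≤ m → density Diff i j =
      (if (j : ℕ∞) = diffThreshold A B m σ (i - 1) then 1 else 0) -
        (if (j : ℕ∞) = diffThreshold A B m σ i then 1 else 0) := fun j hj hjm =>
    density_eq_of_step Diff _ hj fun a j' hj' =>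
      (hDiff a j').trans (LCS_cons_sub_Pmat_eq_ite hle a (hj'.trans hjm))
  have hpivot : ∀ j, 1 ≤ j → j ≤ m → density (Pmat A B) i j ≠ 0 →
      jminP A B m (i - 1) i = j := fun j hj hjm hp =>
    jminP_pred_self_eq hi1 hj hjm hp fun j' h1 h2 hp' => hRow i hi1 hin j' j h1 h2 hj hjm hp' hp
  have hcol : ∀ j, 1 ≤ j → j ≤ m → density (Pmat A B) i j ≠ 0 →
      ∀ i', i < i' → i' ≤ B.length → density (Pmat A B) i' j = 0 :=
    fun j hj hjm hp i' hii' hi'n => by_contra fun hp' =>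
      absurd (hCol j hj hjm i i' hi1 hin (by omega) hi'n hp hp') (by omega)
  exact ⟨fun hσ => density_row_of_getElem_ne hi1 hσ hrow hpivot,
    fun hσ => density_row_of_getElem_eq hi1 hσ hrow hpivot hcol⟩

/-- description of row i of the density matrix of Diff
(columns 1,…,m only), in the two cases B[i] ≠ σ and B[i] = σ. -/
theorem stmt_18 {α : Type*} (A B : List α) (m n : ℕ)
    (hA : A.length = m) (hB : B.length = n) (σ : α)
    (Diff : ℕ → ℕ → ℤ)
    (hDiff : ∀ i j, Diff i j =
      (LCS (substr B i n) (σ :: substr A 0 j) : ℤ) - Pmat A B i j)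
    (hRow : ∀ i, 1 ≤ i → i ≤ n → ∀ j₁ j₂, 1 ≤ j₁ → j₁ ≤ m → 1 ≤ j₂ → j₂ ≤ m →
      density (Pmat A B) i j₁ ≠ 0 → density (Pmat A B) i j₂ ≠ 0 → j₁ = j₂)
    (hCol : ∀ j, 1 ≤ j → j ≤ m → ∀ i₁ i₂, 1 ≤ i₁ → i₁ ≤ n → 1 ≤ i₂ → i₂ ≤ n →
      density (Pmat A B) i₁ j ≠ 0 → density (Pmat A B) i₂ j ≠ 0 → i₁ = i₂)
    (hVal : ∀ i, 1 ≤ i → i ≤ n → ∀ j, 1 ≤ j → j ≤ m →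
      density (Pmat A B) i j ≠ 0 → density (Pmat A B) i j = -1)
    (i : ℕ) (hi1 : 1 ≤ i) (hin : i ≤ n) :
    -- Part (1): B[i] ≠ σ
    (B[i - 1]? ≠ some σ →
      ((∃ j, 1 ≤ j ∧ j ≤ m ∧ density Diff i j ≠ 0) ↔
        ∃ k : ℕ, nextmatch i σ B = (k : ℕ∞) ∧
          ∃ j, 1 ≤ j ∧ j ≤ m ∧ density (Pmat A B) i j ≠ 0 ∧
            (j : ℕ∞) < jminP A B m i k) ∧
      (∀ k : ℕ, nextmatch i σ B = (k : ℕ∞) →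
        ∀ j, 1 ≤ j → j ≤ m → density (Pmat A B) i j ≠ 0 →
          (j : ℕ∞) < jminP A B m i k →
          density Diff i j = 1 ∧
          (∀ j₀ : ℕ, jminP A B m i k = (j₀ : ℕ∞) → density Diff i j₀ = -1) ∧
          (∀ j'', 1 ≤ j'' → j'' ≤ m → j'' ≠ j →
            jminP A B m i k ≠ (j'' : ℕ∞) → density Diff i j'' = 0))) ∧
    -- Part (2): B[i] = σ
    (B[i - 1]? = some σ →
      (∀ k : ℕ, nextmatch i σ B = (k : ℕ∞) →
        ∀ j₀ : ℕ, jminP A B m i k = (j₀ : ℕ∞) → density Diff i j₀ = -1) ∧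
      (∀ j, 1 ≤ j → j ≤ m → density (Pmat A B) i j ≠ 0 → density Diff i j = 1) ∧
      (∀ j'', 1 ≤ j'' → j'' ≤ m → density (Pmat A B) i j'' = 0 →
        (∀ k j₀ : ℕ, nextmatch i σ B = (k : ℕ∞) →
          jminP A B m i k = (j₀ : ℕ∞) → j'' ≠ j₀) →
        density Diff i j'' = 0)) :=
  stmt_18_general A B m n hB σ Diff hDiff hRow hCol hVal i hi1 hin
end

section
/- Let A, B be strings of lengths m and n and σ a character; set B' = B·σ (σ appended to B). Let P and P' be the all scores matrices P of the pairs (A,B) and (A,B') respectively (so P' is indexed by [0:n+1]×[0:m]), and let K' be the all scores matrix K of the pair (A,B') (indexed by [0:n+1]×[0:n+1]). Define Diff[i,m] = P'[i,m] − P[i,m] for i ∈ [0:n]. Then for every i ∈ [1:n], the density entry K'□[i,n+1] equals Diff[i,m] − Diff[i−1,m]; in particular, if Diff[i,m] = 1 and Diff[i−1,m] = 0 then (i,n+1) is a pivotal point of K'□ with K'□[i,n+1] = 1. Moreover, if σ does not occur in A, then K'□[n+1,n+1] = 1. -/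
variable {α : Type*}

/-! The last column of `K'` is the last column of `P'`, because `B'[i..n+1]` is a suffix of `B'`
and `A[0..m] = A`; likewise column `n` of `K'` only sees `B` and is the last column of `P`. The
density entry `K'□[i,n+1]` is therefore a difference of differences of these columns. At the
corner, `K'[n,n] = K'[n+1,n+1] = 0`, the convention for `i > j` gives `K'[n+1,n] = -1`, and
`K'[n,n+1] = LCS(σ, A) = 0` when `σ ∉ A`. -/

lemma LCS_eq_zero_of_disjoint {X Y : List α} (h : X.Disjoint Y) : LCS X Y = 0 := by
  have hset : {k | ∃ Z : List α, Z.length = k ∧ Z.Sublist X ∧ Z.Sublist Y} = {0} := by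
    ext k
    simp only [Set.mem_ofPred_eq, Set.mem_singleton_iff]
    constructor
    · rintro ⟨Z, rfl, hX, hY⟩
      rw [List.length_eq_zero_iff, List.eq_nil_iff_forall_not_mem]
      exact fun a ha => h (hX.subset ha) (hY.subset ha)
    · rintro rfl
      exact ⟨[], rfl, List.nil_sublist _, List.nil_sublist _⟩
  rw [LCS, hset, csSup_singleton]

section Kmat

variable (A B : List α)

lemma Kmat_self (i : ℕ) : Kmat A B i i = 0 := by
  simp [Kmat, substr, LCS_eq_zero_of_disjoint]

lemma Kmat_succ_self (j : ℕ) : Kmat A B (j + 1) j = -1 := by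
  simp [Kmat]

lemma Kmat_length_eq_Pmat {i : ℕ} (hi : i ≤ B.length) :
    Kmat A B i B.length = Pmat A B i A.length := by
  simp [Kmat, Pmat, substr, hi]

lemma Kmat_append_of_le_length (C : List α) {i j : ℕ} (hj : j ≤ B.length) :
    Kmat A (B ++ C) i j = Kmat A B i j := by
  simp [Kmat, substr, List.take_append_of_le_length hj]

lemma Kmat_append_singleton_length {σ : α} (hσ : σ ∉ A) :
    Kmat A (B ++ [σ]) B.length (B.length + 1) = 0 := by
  have hsub : substr (B ++ [σ]) B.length (B.length + 1) = [σ] := by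
    simp [substr, List.take_of_length_le]
  simp [Kmat, hsub, LCS_eq_zero_of_disjoint, hσ]

end Kmat

/-- appending σ to B; the new column n+1 of the density matrix of
the new K is determined by the differences of column m of the P matrices, and if
σ does not occur in A then K'□[n+1,n+1] = 1. -/
theorem stmt_19 {α : Type*} (A B : List α) (m n : ℕ)
    (hA : A.length = m) (hB : B.length = n) (σ : α) :
    (∀ i, 1 ≤ i → i ≤ n →
      (density (Kmat A (B ++ [σ])) i (n + 1) =
        (Pmat A (B ++ [σ]) i m - Pmat A B i m) -
          (Pmat A (B ++ [σ]) (i - 1) m - Pmat A B (i - 1) m)) ∧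
      ((Pmat A (B ++ [σ]) i m - Pmat A B i m = 1 ∧
          Pmat A (B ++ [σ]) (i - 1) m - Pmat A B (i - 1) m = 0) →
        density (Kmat A (B ++ [σ])) i (n + 1) = 1)) ∧
    (σ ∉ A → density (Kmat A (B ++ [σ])) (n + 1) (n + 1) = 1) := by
  subst hA hB
  have hlen : (B ++ [σ]).length = B.length + 1 := by simp
  have hcol : ∀ i ≤ B.length + 1,
      Kmat A (B ++ [σ]) i (B.length + 1) = Pmat A (B ++ [σ]) i A.length := by
    intro i hi
    rw [← hlen, Kmat_length_eq_Pmat _ _ (hlen ▸ hi)]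
  have hprev : ∀ i ≤ B.length, Kmat A (B ++ [σ]) i B.length = Pmat A B i A.length := by
    intro i hi
    rw [Kmat_append_of_le_length _ _ _ le_rfl, Kmat_length_eq_Pmat _ _ hi]
  refine ⟨fun i hi1 hi2 => ?_, fun hσ => ?_⟩
  · have hdensity : density (Kmat A (B ++ [σ])) i (B.length + 1) =
        (Pmat A (B ++ [σ]) i A.length - Pmat A B i A.length) -
          (Pmat A (B ++ [σ]) (i - 1) A.length - Pmat A B (i - 1) A.length) := by
      rw [density, Nat.add_sub_cancel, hcol i (by omega), hcol (i - 1) (by omega), hprev i hi2,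
        hprev (i - 1) (by omega)]
      ring
    exact ⟨hdensity, fun ⟨h1, h0⟩ => by rw [hdensity, h1, h0]; rfl⟩
  · rw [density, Nat.add_sub_cancel, Kmat_self, Kmat_self, Kmat_append_singleton_length _ _ hσ,
      Kmat_succ_self]
    rfl
end
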